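/- There exists exactly one admissible vector v* ∈ ℝ^d, and it is the unique global minimizer of L̂. (Theorem 1 of the paper, general case of a compact set of supporting data.) -/

import Mathlib

/-!
Since `Φ` is a minimum of affine functions, every active momentum at `v` is a supergradient of the
concave function `Φ` at `v`, and so is every point of their convex hull. Hence if `v` is
admissible, the strict gradient inequality for `L` gives `L̂ u > L̂ v` for all `u ≠ v`, which yields
both uniqueness and strict minimality. Superlinearity makes `L̂` coercive, so `L̂` has a minimizer
`v`, and `v` is admissible: otherwise some direction `w` separates `∇L(v)` strictly from the
(compact, by Carathéodory) convex hull of the active momenta, and since the active set is upper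
semicontinuous, `Φ` grows along `w` faster than `L` does, so `L̂` decreases along `w`.
-/

open scoped InnerProductSpace
open Set Filter Topology

noncomputable section

/-- The lower envelope `Φ(v) = min_{(H,p)∈S} (−H + ⟨p, v⟩)` (attained by compactness). -/
def lowerEnvS {d : ℕ} (S : Set (ℝ × EuclideanSpace ℝ (Fin d)))
    (v : EuclideanSpace ℝ (Fin d)) : ℝ :=
  sInf ((fun q : ℝ × EuclideanSpace ℝ (Fin d) => -q.1 + ⟪q.2, v⟫_ℝ) '' S)

/-- The active set `I(v)` of pairs `(H,p) ∈ S` attaining the minimum defining `Φ(v)`. -/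
def activeSetS {d : ℕ} (S : Set (ℝ × EuclideanSpace ℝ (Fin d)))
    (v : EuclideanSpace ℝ (Fin d)) : Set (ℝ × EuclideanSpace ℝ (Fin d)) :=
  {q ∈ S | -q.1 + ⟪q.2, v⟫_ℝ = lowerEnvS S v}

def IsAdmissibleS {d : ℕ} (L : EuclideanSpace ℝ (Fin d) → ℝ)
    (S : Set (ℝ × EuclideanSpace ℝ (Fin d)))
    (v : EuclideanSpace ℝ (Fin d)) : Prop :=
  gradient L v ∈ convexHull ℝ (Prod.snd '' activeSetS S v)

theorem isCompact_convexHull {E : Type*} [AddCommGroup E] [Module ℝ E]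
    [TopologicalSpace E] [IsTopologicalAddGroup E] [ContinuousSMul ℝ E] [FiniteDimensional ℝ E]
    {K : Set E} (hK : IsCompact K) : IsCompact (convexHull ℝ K) := by
  -- By Carathéodory, convex combinations of `finrank ℝ E + 1` points of `K` suffice.
  have hhull : convexHull ℝ K = ⋃ m ∈ Finset.range (Module.finrank ℝ E + 2),
      (fun p : (Fin m → ℝ) × (Fin m → E) => ∑ i, p.1 i • p.2 i) ''
        (stdSimplex ℝ (Fin m) ×ˢ univ.pi fun _ => K) := by
    refine Subset.antisymm (fun x hx => ?_) (iUnion₂_subset fun m _ => ?_)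
    · obtain ⟨ι, _, z, w, hzK, hind, hw₀, hw₁, rfl⟩ := eq_pos_convex_span_of_mem_convexHull hx
      have hcard : Fintype.card ι < Module.finrank ℝ E + 2 :=
        hind.card_le_finrank_succ.trans_lt
          (by linarith [Submodule.finrank_le (vectorSpan ℝ (range z))])
      let e := (Fintype.equivFin ι).symm
      refine mem_biUnion (Finset.mem_range.2 hcard)
        ⟨(w ∘ e, z ∘ e), ⟨⟨fun i => (hw₀ _).le, ?_⟩, fun i _ => hzK (mem_range_self _)⟩, ?_⟩
      · simpa [e] using (e.sum_comp w).trans hw₁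
      · exact e.sum_comp fun i => w i • z i
    · rintro _ ⟨p, ⟨⟨hp₀, hp₁⟩, hpK⟩, rfl⟩
      exact (convex_convexHull ℝ K).sum_mem (fun i _ => hp₀ i) hp₁
        fun i _ => subset_convexHull ℝ K (hpK i (mem_univ i))
  rw [hhull]
  exact (Finset.range _).finite_toSet.isCompact_biUnion fun m _ =>
    (isCompact_stdSimplex ℝ (Fin m) |>.prod (isCompact_univ_pi fun _ => hK)).image
      (by fun_prop)

theorem exists_inner_lt_of_notMem_convexHull {E : Type*} [NormedAddCommGroup E]
    [InnerProductSpace ℝ E] [FiniteDimensional ℝ E] {K : Set E} (hK : IsCompact K) {x : E}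
    (hx : x ∉ convexHull ℝ K) : ∃ w : E, ∃ u : ℝ, ⟪x, w⟫_ℝ < u ∧ ∀ p ∈ K, u < ⟪p, w⟫_ℝ := by
  obtain ⟨f, u, hfx, hfK⟩ := geometric_hahn_banach_point_closed (convex_convexHull ℝ K)
    (isCompact_convexHull hK).isClosed hx
  have hf : ∀ y, ⟪y, (InnerProductSpace.toDual ℝ E).symm f⟫_ℝ = f y := fun y => by
    rw [real_inner_comm, InnerProductSpace.toDual_symm_apply]
  exact ⟨_, u, (hf x).symm ▸ hfx, fun p hp => (hf p).symm ▸ hfK p (subset_convexHull ℝ K hp)⟩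

theorem ConvexOn.add_fderiv_sub_le {E : Type*} [NormedAddCommGroup E] [NormedSpace ℝ E]
    {f : E → ℝ} {f' : E →L[ℝ] ℝ} {x : E} (hf : ConvexOn ℝ univ f) (hx : HasFDerivAt f f' x)
    (y : E) : f x + f' (y - x) ≤ f y := by
  have hline : HasDerivAt (f ∘ AffineMap.lineMap (k := ℝ) x y) (f' (y - x)) 0 :=
    ((AffineMap.lineMap_apply_zero (k := ℝ) x y).symm ▸ hx).comp_hasDerivAt (0 : ℝ)
      AffineMap.hasDerivAt_lineMap
  have hslope := (hf.comp_affineMap (AffineMap.lineMap x y)).le_slope_of_hasDerivAt (mem_univ 0)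
    (mem_univ 1) zero_lt_one hline
  simp only [slope_def_field, Function.comp_apply, AffineMap.lineMap_apply_one,
    AffineMap.lineMap_apply_zero, sub_zero, div_one] at hslope
  linarith

theorem StrictConvexOn.add_fderiv_sub_lt {E : Type*} [NormedAddCommGroup E] [NormedSpace ℝ E]
    {f : E → ℝ} {f' : E →L[ℝ] ℝ} {x y : E} (hf : StrictConvexOn ℝ univ f) (hx : HasFDerivAt f f' x)
    (hxy : x ≠ y) : f x + f' (y - x) < f y := by
  -- Strict convexity at the midpoint leaves room in the gradient inequality there.
  have hmid := hf.2 (mem_univ x) (mem_univ y) hxy (by norm_num : (0:ℝ) < 1/2)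
    (by norm_num : (0:ℝ) < 1/2) (by norm_num)
  have hle := hf.convexOn.add_fderiv_sub_le hx ((1/2 : ℝ) • x + (1/2 : ℝ) • y)
  have hhalf : (1/2 : ℝ) • x + (1/2 : ℝ) • y - x = (1/2 : ℝ) • (y - x) := by module
  rw [hhalf, map_smul, smul_eq_mul] at hle
  simp only [smul_eq_mul] at hmid
  linarith

theorem HasFDerivAt.eventually_lt_add_smul {E : Type*} [NormedAddCommGroup E] [NormedSpace ℝ E]
    {f : E → ℝ} {f' : E →L[ℝ] ℝ} {x w : E} {u : ℝ} (hx : HasFDerivAt f f' x) (hu : f' w < u) :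
    ∀ᶠ t in 𝓝[>] (0 : ℝ), f (x + t • w) < f x + t * u := by
  have hline : HasDerivAt (fun t : ℝ => x + t • w) w 0 := by
    simpa using ((hasDerivAt_id (0 : ℝ)).smul_const w).const_add x
  have hcomp : HasDerivAt (fun t : ℝ => f (x + t • w)) (f' w) 0 :=
    (by simpa using hx : HasFDerivAt f f' (x + (0 : ℝ) • w)).comp_hasDerivAt 0 hline
  filter_upwards [hcomp.hasDerivWithinAt.limsup_slope_le' (lt_irrefl (0 : ℝ)) hu,
    self_mem_nhdsWithin] with t hslope (ht : 0 < t)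
  rw [slope_def_field, div_lt_iff₀ (by simpa using ht)] at hslope
  simp only [zero_smul, add_zero, sub_zero] at hslope
  linarith

theorem tendsto_sub_atTop_of_superlinear {E : Type*} [NormedAddCommGroup E] {f g : E → ℝ}
    (hf : Tendsto (fun v => f v / ‖v‖) (comap norm atTop) atTop) {a b : ℝ}
    (hg : ∀ v, g v ≤ a + b * ‖v‖) : Tendsto (fun v => f v - g v) (comap norm atTop) atTop := by
  have hnorm : Tendsto norm (comap norm atTop : Filter E) atTop := tendsto_comap
  have hlin : Tendsto (fun v => ‖v‖ * (f v / ‖v‖ + -b) + -a) (comap norm atTop) atTop :=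
    tendsto_atTop_add_const_right _ _
      (hnorm.atTop_mul_atTop₀ (tendsto_atTop_add_const_right _ _ hf))
  refine tendsto_atTop_mono' _ ?_ hlin
  filter_upwards [hnorm.eventually_gt_atTop 0] with v hv
  rw [mul_add, mul_div_cancel₀ _ hv.ne']
  linarith [hg v]

section LowerEnvelope

variable {d : ℕ} {S : Set (ℝ × EuclideanSpace ℝ (Fin d))}

theorem isCompact_image_neg_fst_add_inner (hS : IsCompact S) (v : EuclideanSpace ℝ (Fin d)) :
    IsCompact ((fun q : ℝ × EuclideanSpace ℝ (Fin d) => -q.1 + ⟪q.2, v⟫_ℝ) '' S) :=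
  hS.image (by fun_prop)

theorem lowerEnvS_le (hS : IsCompact S) {q : ℝ × EuclideanSpace ℝ (Fin d)} (hq : q ∈ S)
    (v : EuclideanSpace ℝ (Fin d)) : lowerEnvS S v ≤ -q.1 + ⟪q.2, v⟫_ℝ :=
  csInf_le (isCompact_image_neg_fst_add_inner hS v).bddBelow (mem_image_of_mem _ hq)

theorem activeSetS_nonempty (hS : IsCompact S) (hne : S.Nonempty) (v : EuclideanSpace ℝ (Fin d)) :
    (activeSetS S v).Nonempty := by
  obtain ⟨q, hq, hmin⟩ := (isCompact_image_neg_fst_add_inner hS v).sInf_mem (hne.image _)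
  exact ⟨q, hq, hmin⟩

theorem continuous_lowerEnvS (hS : IsCompact S) : Continuous (lowerEnvS S) :=
  hS.continuous_sInf (f := fun v q => -q.1 + ⟪q.2, v⟫_ℝ) (by fun_prop)

theorem lowerEnvS_le_add_inner_of_mem_activeSetS (hS : IsCompact S)
    {v : EuclideanSpace ℝ (Fin d)} {q : ℝ × EuclideanSpace ℝ (Fin d)} (hq : q ∈ activeSetS S v)
    (w : EuclideanSpace ℝ (Fin d)) : lowerEnvS S w ≤ lowerEnvS S v + ⟪q.2, w - v⟫_ℝ := by
  rw [← hq.2, inner_sub_right]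
  linarith [lowerEnvS_le hS hq.1 w]

theorem lowerEnvS_le_add_inner_of_mem_convexHull (hS : IsCompact S)
    {v p : EuclideanSpace ℝ (Fin d)} (hp : p ∈ convexHull ℝ (Prod.snd '' activeSetS S v))
    (w : EuclideanSpace ℝ (Fin d)) : lowerEnvS S w ≤ lowerEnvS S v + ⟪p, w - v⟫_ℝ := by
  have hconv : Convex ℝ {p : EuclideanSpace ℝ (Fin d) |
      ∀ w, lowerEnvS S w ≤ lowerEnvS S v + ⟪p, w - v⟫_ℝ} := by
    intro x hx y hy a b ha hb hab w
    calc lowerEnvS S w = a * lowerEnvS S w + b * lowerEnvS S w := by rw [← add_mul, hab, one_mul]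
      _ ≤ a * (lowerEnvS S v + ⟪x, w - v⟫_ℝ) + b * (lowerEnvS S v + ⟪y, w - v⟫_ℝ) :=
        add_le_add (mul_le_mul_of_nonneg_left (hx w) ha) (mul_le_mul_of_nonneg_left (hy w) hb)
      _ = lowerEnvS S v + ⟪a • x + b • y, w - v⟫_ℝ := by
        rw [inner_add_left, real_inner_smul_left, real_inner_smul_left]
        linear_combination lowerEnvS S v * hab
  refine convexHull_min ?_ hconv hp w
  rintro _ ⟨q, hq, rfl⟩
  exact lowerEnvS_le_add_inner_of_mem_activeSetS hS hq

theorem eventually_activeSetS_subset (hS : IsCompact S) {v : EuclideanSpace ℝ (Fin d)}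
    {U : Set (ℝ × EuclideanSpace ℝ (Fin d))} (hU : IsOpen U) (hvU : activeSetS S v ⊆ U) :
    ∀ᶠ x in 𝓝 v, activeSetS S x ⊆ U := by
  have hsep : ∀ᶠ x in 𝓝 v, ∀ q ∈ S, q ∈ U ∨ lowerEnvS S x < -q.1 + ⟪q.2, x⟫_ℝ := by
    refine hS.eventually_forall_of_forall_eventually fun q hq => ?_
    by_cases hqU : q ∈ U
    · exact ((continuous_snd.tendsto (v, q)).eventually (hU.mem_nhds hqU)).mono
        fun z hz => Or.inl hz
    · have hlt : lowerEnvS S v < -q.1 + ⟪q.2, v⟫_ℝ :=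
        (lowerEnvS_le hS hq v).lt_of_ne fun h => hqU (hvU ⟨hq, h.symm⟩)
      have hcont : Continuous fun z : EuclideanSpace ℝ (Fin d) × (ℝ × EuclideanSpace ℝ (Fin d)) =>
          -z.2.1 + ⟪z.2.2, z.1⟫_ℝ := by fun_prop
      have hΦ : ContinuousAt (fun z : EuclideanSpace ℝ (Fin d) × (ℝ × EuclideanSpace ℝ (Fin d)) =>
          lowerEnvS S z.1) (v, q) :=
        ((continuous_lowerEnvS hS).comp continuous_fst).continuousAt
      exact (hΦ.eventually_lt hcont.continuousAt hlt).mono fun z hz => Or.inr hz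
  filter_upwards [hsep] with x hx q hq
  exact (hx q hq.1).resolve_right fun h => h.ne' hq.2

theorem eventually_add_mul_le_lowerEnvS_add_smul (hS : IsCompact S) (hne : S.Nonempty)
    {v w : EuclideanSpace ℝ (Fin d)} {u : ℝ} (hu : ∀ q ∈ activeSetS S v, u < ⟪q.2, w⟫_ℝ) :
    ∀ᶠ t in 𝓝[>] (0 : ℝ), lowerEnvS S v + t * u ≤ lowerEnvS S (v + t • w) := by
  have hU : IsOpen {q : ℝ × EuclideanSpace ℝ (Fin d) | u < ⟪q.2, w⟫_ℝ} :=
    isOpen_lt continuous_const (by fun_prop)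
  have hline : Tendsto (fun t : ℝ => v + t • w) (𝓝 0) (𝓝 v) :=
    (by fun_prop : Continuous fun t : ℝ => v + t • w).tendsto' 0 v (by simp)
  filter_upwards [self_mem_nhdsWithin,
    nhdsWithin_le_nhds (hline.eventually (eventually_activeSetS_subset hS hU hu))]
    with t (ht : 0 < t) hsub
  obtain ⟨q, hq⟩ := activeSetS_nonempty hS hne (v + t • w)
  have hqw : t * u ≤ t * ⟪q.2, w⟫_ℝ := mul_le_mul_of_nonneg_left (le_of_lt (hsub hq)) ht.le
  rw [← hq.2, inner_add_right, real_inner_smul_right]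
  linarith [lowerEnvS_le hS hq.1 v]

variable {L : EuclideanSpace ℝ (Fin d) → ℝ}

theorem exists_forall_sub_lowerEnvS_le (hS : IsCompact S) (hne : S.Nonempty) (hL : Continuous L)
    (hsuper : Tendsto (fun v => L v / ‖v‖) (comap norm atTop) atTop) :
    ∃ v, ∀ u, L v - lowerEnvS S v ≤ L u - lowerEnvS S u := by
  obtain ⟨q, hq⟩ := hne
  refine (hL.sub (continuous_lowerEnvS hS)).exists_forall_le ?_
  rw [← Metric.cobounded_eq_cocompact, ← comap_norm_atTop]
  refine tendsto_sub_atTop_of_superlinear hsuper (a := -q.1) (b := ‖q.2‖) fun v => ?_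
  linarith [lowerEnvS_le hS hq v, real_inner_le_norm q.2 v]

theorem sub_lowerEnvS_lt_of_isAdmissibleS (hS : IsCompact S) (hL : StrictConvexOn ℝ univ L)
    {v u : EuclideanSpace ℝ (Fin d)} (hLv : DifferentiableAt ℝ L v) (hv : IsAdmissibleS L S v)
    (hvu : v ≠ u) : L v - lowerEnvS S v < L u - lowerEnvS S u := by
  have hgrad := hL.add_fderiv_sub_lt (hasGradientAt_iff_hasFDerivAt.mp hLv.hasGradientAt) hvu
  rw [InnerProductSpace.toDual_apply_apply] at hgrad
  linarith [lowerEnvS_le_add_inner_of_mem_convexHull hS hv u]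

theorem isAdmissibleS_of_forall_sub_lowerEnvS_le (hS : IsCompact S) (hne : S.Nonempty)
    {v : EuclideanSpace ℝ (Fin d)} (hLv : DifferentiableAt ℝ L v)
    (hmin : ∀ u, L v - lowerEnvS S v ≤ L u - lowerEnvS S u) : IsAdmissibleS L S v := by
  by_contra hnot
  have hactive : IsCompact (Prod.snd '' activeSetS S v) :=
    (hS.inter_right (isClosed_eq (by fun_prop) continuous_const)).image continuous_snd
  obtain ⟨w, u, hgw, hwK⟩ := exists_inner_lt_of_notMem_convexHull hactive hnot
  have hLw := (hasGradientAt_iff_hasFDerivAt.mp hLv.hasGradientAt).eventually_lt_add_smul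
    (w := w) (u := u) (by rw [InnerProductSpace.toDual_apply_apply]; exact hgw)
  have hΦw := eventually_add_mul_le_lowerEnvS_add_smul hS hne
    fun q hq => hwK q.2 (mem_image_of_mem _ hq)
  obtain ⟨t, hLt, hΦt⟩ := (hLw.and hΦw).exists
  linarith [hmin (v + t • w)]

end LowerEnvelope

theorem unique_admissible_velocity_compact_general {d : ℕ}
    (L : EuclideanSpace ℝ (Fin d) → ℝ)
    (hdiff : Differentiable ℝ L)
    (hconv : StrictConvexOn ℝ Set.univ L)
    (hsuper : Filter.Tendsto (fun v => L v / ‖v‖)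
      (Filter.comap (fun v : EuclideanSpace ℝ (Fin d) => ‖v‖) Filter.atTop) Filter.atTop)
    (S : Set (ℝ × EuclideanSpace ℝ (Fin d)))
    (hS : S.Nonempty) (hScomp : IsCompact S) :
    ∃ vstar : EuclideanSpace ℝ (Fin d),
      IsAdmissibleS L S vstar ∧
      (∀ v, IsAdmissibleS L S v → v = vstar) ∧
      (∀ v, v ≠ vstar →
        L vstar - lowerEnvS S vstar < L v - lowerEnvS S v) := by
  obtain ⟨vstar, hmin⟩ := exists_forall_sub_lowerEnvS_le hScomp hS hdiff.continuous hsuper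
  have hadm := isAdmissibleS_of_forall_sub_lowerEnvS_le hScomp hS (hdiff vstar) hmin
  refine ⟨vstar, hadm, fun v hv => ?_, fun v hv =>
    sub_lowerEnvS_lt_of_isAdmissibleS hScomp hconv (hdiff vstar) hadm hv.symm⟩
  by_contra hne
  exact (sub_lowerEnvS_lt_of_isAdmissibleS hScomp hconv (hdiff v) hv hne).not_ge (hmin v)

/-- Theorem 1 (general compact case): there is exactly one admissible velocity, and it is
the unique global minimizer of `L̂(v) = L(v) − Φ(v)`. -/
theorem unique_admissible_velocity_compact {d : ℕ} (hd : 1 ≤ d)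
    (L : EuclideanSpace ℝ (Fin d) → ℝ)
    (hdiff : Differentiable ℝ L)
    (hconv : StrictConvexOn ℝ Set.univ L)
    (hsuper : Filter.Tendsto (fun v => L v / ‖v‖)
      (Filter.comap (fun v : EuclideanSpace ℝ (Fin d) => ‖v‖) Filter.atTop) Filter.atTop)
    (S : Set (ℝ × EuclideanSpace ℝ (Fin d)))
    (hS : S.Nonempty) (hScomp : IsCompact S) :
    ∃ vstar : EuclideanSpace ℝ (Fin d),
      IsAdmissibleS L S vstar ∧
      (∀ v, IsAdmissibleS L S v → v = vstar) ∧
      (∀ v, v ≠ vstar →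
        L vstar - lowerEnvS S vstar < L v - lowerEnvS S v) :=
  unique_admissible_velocity_compact_general L hdiff hconv hsuper S hS hScomp
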